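/- arXiv:1301.4666 — 7 statements merged into one kernel-verified Lean document; each statement's English description precedes it below -/
import Mathlib

section
/- If f is β-smooth and convex on a convex compact set P with diameter D, x* minimizes f on P, x_{t+1} = x_t + α(p_t - x_t) with α ∈ (0,1), where p_t ∈ P satisfies p_tᵀ∇f(x_t) ≤ x*ᵀ∇f(x_t) and ‖x_t - p_t‖ ≤ min(ρr_t, D), and ‖x_t - x*‖ ≤ r_t, then f(x_{t+1}) - f(x*) ≤ (1-α)(f(x_t) - f(x*)) + βα² min(ρ²r_t², D²). -/
/-!
The smoothness upper bound at `x` splits `f x'` into a linear and a quadratic part. The linear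
part `α ⟪∇f x, p - x⟫` is at most `α ⟪∇f x, x* - x⟫` by the oracle property, hence at most
`α (f x* - f x)` by convexity; the quadratic part is `β α² ‖x - p‖²`, and `‖x - p‖` is bounded
by both `ρ r` and `D`.
-/

open scoped RealInnerProductSpace

section ConditionalGradient

variable {E : Type*} [NormedAddCommGroup E] [InnerProductSpace ℝ E]

lemma inner_smul_sub_le_of_oracle {g x p xs : E} {fx fxs α : ℝ} (hα : 0 ≤ α)
    (horacle : ⟪g, p⟫ ≤ ⟪g, xs⟫) (hconvex : fx + ⟪g, xs - x⟫ ≤ fxs) :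
    ⟪g, α • (p - x)⟫ ≤ α * (fxs - fx) := by
  have hdir : ⟪g, p - x⟫ ≤ ⟪g, xs - x⟫ := by
    rw [inner_sub_right, inner_sub_right]
    linarith
  rw [real_inner_smul_right]
  exact mul_le_mul_of_nonneg_left (by linarith) hα

theorem Convex.conditionalGradient_step_le {P : Set E} (hP : Convex ℝ P) {f : E → ℝ}
    {g x p xs : E} {β α : ℝ} (hα : α ∈ Set.Icc 0 1) (hx : x ∈ P) (hp : p ∈ P)
    (hsmooth : ∀ y ∈ P, f y ≤ f x + ⟪g, y - x⟫ + β * ‖x - y‖ ^ 2)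
    (hconvex : f x + ⟪g, xs - x⟫ ≤ f xs) (horacle : ⟪g, p⟫ ≤ ⟪g, xs⟫) :
    f (x + α • (p - x)) - f xs ≤ (1 - α) * (f x - f xs) + β * α ^ 2 * ‖x - p‖ ^ 2 := by
  have hupper := hsmooth _ (hP.add_smul_sub_mem hx hp hα)
  have hlinear := inner_smul_sub_le_of_oracle (fx := f x) hα.1 horacle hconvex
  have hstep : ‖x - (x + α • (p - x))‖ = α * ‖x - p‖ := by
    rw [sub_add_cancel_left, norm_neg, norm_smul, Real.norm_of_nonneg hα.1, norm_sub_rev]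
  rw [add_sub_cancel_left, hstep, mul_pow] at hupper
  linarith

end ConditionalGradient

lemma sq_le_min_sq {t a b : ℝ} (ht : 0 ≤ t) (h : t ≤ min a b) : t ^ 2 ≤ min (a ^ 2) (b ^ 2) :=
  le_min (pow_le_pow_left₀ ht (h.trans (min_le_left _ _)) 2)
    (pow_le_pow_left₀ ht (h.trans (min_le_right _ _)) 2)

theorem stmt_1_general {n : ℕ} (P : Set (EuclideanSpace ℝ (Fin n))) (hP : Convex ℝ P)
    (f : EuclideanSpace ℝ (Fin n) → ℝ) (g : EuclideanSpace ℝ (Fin n) → EuclideanSpace ℝ (Fin n))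
    (β D ρ r α : ℝ) (hβ : 0 < β) (hα : α ∈ Set.Ioo (0:ℝ) 1)
    (hsmooth : ∀ x ∈ P, ∀ y ∈ P, f y ≤ f x + ⟪g x, y - x⟫ + β * ‖x - y‖ ^ 2)
    (hconvex : ∀ x ∈ P, ∀ y ∈ P, f y ≥ f x + ⟪g x, y - x⟫)
    (xs : EuclideanSpace ℝ (Fin n)) (hxs : xs ∈ P)
    (x p x' : EuclideanSpace ℝ (Fin n)) (hx : x ∈ P) (hp : p ∈ P)
    (hporacle : ⟪g x, p⟫ ≤ ⟪g x, xs⟫)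
    (hpdist : ‖x - p‖ ≤ min (ρ * r) D)
    (hupd : x' = x + α • (p - x)) :
    f x' - f xs ≤ (1 - α) * (f x - f xs) + β * α ^ 2 * min (ρ ^ 2 * r ^ 2) (D ^ 2) := by
  subst hupd
  have hdist : ‖x - p‖ ^ 2 ≤ min (ρ ^ 2 * r ^ 2) (D ^ 2) := by
    simpa only [mul_pow] using sq_le_min_sq (norm_nonneg _) hpdist
  calc f (x + α • (p - x)) - f xs
      ≤ (1 - α) * (f x - f xs) + β * α ^ 2 * ‖x - p‖ ^ 2 :=
        hP.conditionalGradient_step_le (Set.Ioo_subset_Icc_self hα) hx hp (hsmooth x hx)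
          (hconvex x hx xs hxs) hporacle
    _ ≤ (1 - α) * (f x - f xs) + β * α ^ 2 * min (ρ ^ 2 * r ^ 2) (D ^ 2) := by gcongr

/-- One-step progress bound for the conditional gradient update with a local linear oracle:
if `f` is `β`-smooth and convex on `P`, `xs` minimizes `f` on `P`,
`p` satisfies `⟪g x, p⟫ ≤ ⟪g x, xs⟫` and `‖x - p‖ ≤ min (ρ * r) D`, `‖x - xs‖ ≤ r`, and
`x' = x + α • (p - x)`, then
`f x' - f xs ≤ (1 - α) * (f x - f xs) + β * α ^ 2 * min (ρ ^ 2 * r ^ 2) (D ^ 2)`. -/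
theorem stmt_1 {n : ℕ} (P : Set (EuclideanSpace ℝ (Fin n))) (hP : Convex ℝ P)
    (hPc : IsCompact P)
    (f : EuclideanSpace ℝ (Fin n) → ℝ) (g : EuclideanSpace ℝ (Fin n) → EuclideanSpace ℝ (Fin n))
    (β D ρ r α : ℝ) (hβ : 0 < β) (hρ : 0 < ρ) (hr : 0 < r) (hα : α ∈ Set.Ioo (0:ℝ) 1)
    (hD : ∀ a ∈ P, ∀ b ∈ P, ‖a - b‖ ≤ D)
    (hsmooth : ∀ x ∈ P, ∀ y ∈ P, f y ≤ f x + ⟪g x, y - x⟫ + β * ‖x - y‖ ^ 2)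
    (hconvex : ∀ x ∈ P, ∀ y ∈ P, f y ≥ f x + ⟪g x, y - x⟫)
    (xs : EuclideanSpace ℝ (Fin n)) (hxs : xs ∈ P) (hmin : ∀ y ∈ P, f xs ≤ f y)
    (x p x' : EuclideanSpace ℝ (Fin n)) (hx : x ∈ P) (hp : p ∈ P)
    (hnear : ‖x - xs‖ ≤ r)
    (hporacle : ⟪g x, p⟫ ≤ ⟪g x, xs⟫)
    (hpdist : ‖x - p‖ ≤ min (ρ * r) D)
    (hupd : x' = x + α • (p - x)) :
    f x' - f xs ≤ (1 - α) * (f x - f xs) + β * α ^ 2 * min (ρ ^ 2 * r ^ 2) (D ^ 2) :=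
  stmt_1_general P hP f g β D ρ r α hβ hα hsmooth hconvex xs hxs x p x' hx hp hporacle hpdist hupd
end

section
/- Let h_t ≥ 0 satisfy h_1 ≤ C and h_{t+1} ≤ (1-α)h_t + (α²βρ²/σ)·C·e^{-σ(t-1)/(4βρ²)} whenever h_t ≤ C·e^{-σ(t-1)/(4βρ²)}, where α = σ/(2βρ²) with σ ≤ 2βρ² (so α ∈ (0,1]). Then for all t ≥ 1, h_t ≤ C·e^{-σ(t-1)/(4βρ²)}. -/
open Real

/-! If `h t ≤ C e^{-(α/2)(t-1)}` with `α = σ/(2βρ²)`, the recurrence gives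
`h (t+1) ≤ (1 - α/2) C e^{-(α/2)(t-1)}`, and `1 - α/2 ≤ e^{-α/2}` closes the induction. -/

lemma one_sub_mul_add_half_mul_le_exp_neg_half_mul {α x B : ℝ} (hα : α ≤ 1) (hx : x ≤ B)
    (hB : 0 ≤ B) : (1 - α) * x + α / 2 * B ≤ exp (-(α / 2)) * B :=
  calc (1 - α) * x + α / 2 * B
      ≤ (1 - α) * B + α / 2 * B := by gcongr
    _ = (-(α / 2) + 1) * B := by ring
    _ ≤ exp (-(α / 2)) * B := by gcongr; exact add_one_le_exp _

lemma div_two_mul_sq_mul_div_eq {σ β ρ : ℝ} (hσ : σ ≠ 0) :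
    (σ / (2 * β * ρ ^ 2)) ^ 2 * β * ρ ^ 2 / σ = σ / (2 * β * ρ ^ 2) / 2 := by
  field_simp

lemma exp_neg_mul_succ_sub_one_div (σ β ρ : ℝ) (t : ℝ) :
    exp (-(σ * (t + 1 - 1)) / (4 * β * ρ ^ 2)) =
      exp (-(σ / (2 * β * ρ ^ 2) / 2)) * exp (-(σ * (t - 1)) / (4 * β * ρ ^ 2)) := by
  rw [← exp_add]
  ring_nf

theorem stmt_2_general (β σ ρ C α : ℝ) (hσ : 0 < σ) (hC : 0 < C)
    (hσβ : σ ≤ 2 * β * ρ ^ 2) (hα : α = σ / (2 * β * ρ ^ 2))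
    (h : ℕ → ℝ) (h1 : h 1 ≤ C)
    (hrec : ∀ t : ℕ, 1 ≤ t →
      h t ≤ C * exp (-(σ * ((t : ℝ) - 1)) / (4 * β * ρ ^ 2)) →
      h (t + 1) ≤ (1 - α) * h t +
        (α ^ 2 * β * ρ ^ 2 / σ) * C * exp (-(σ * ((t : ℝ) - 1)) / (4 * β * ρ ^ 2))) :
    ∀ t : ℕ, 1 ≤ t → h t ≤ C * exp (-(σ * ((t : ℝ) - 1)) / (4 * β * ρ ^ 2)) := by
  have hD : 0 < 2 * β * ρ ^ 2 := hσ.trans_le hσβ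
  have hα1 : α ≤ 1 := hα ▸ div_le_one_of_le₀ hσβ hD.le
  have hcoeff : α ^ 2 * β * ρ ^ 2 / σ = α / 2 :=
    hα ▸ div_two_mul_sq_mul_div_eq hσ.ne'
  intro t ht
  induction t, ht using Nat.le_induction with
  | base => simpa using h1
  | succ n hn ih =>
    have hstep := hrec n hn ih
    rw [hcoeff, mul_assoc] at hstep
    calc h (n + 1)
        ≤ exp (-(α / 2)) * (C * exp (-(σ * ((n : ℝ) - 1)) / (4 * β * ρ ^ 2))) :=
          hstep.trans (one_sub_mul_add_half_mul_le_exp_neg_half_mul hα1 ih (by positivity))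
      _ = C * exp (-(σ * (((n + 1 : ℕ) : ℝ) - 1)) / (4 * β * ρ ^ 2)) := by
          rw [Nat.cast_succ, exp_neg_mul_succ_sub_one_div, hα]
          ring

/-- The recurrence underlying linear convergence of the conditional gradient algorithm with a
local linear oracle: if `h 1 ≤ C`, `h` is nonnegative, `α = σ/(2βρ²)` with `σ ≤ 2βρ²`, and
whenever `h t ≤ C * exp (-σ(t-1)/(4βρ²))` we have
`h (t+1) ≤ (1-α) * h t + (α²βρ²/σ) * C * exp (-σ(t-1)/(4βρ²))`, then
`h t ≤ C * exp (-σ(t-1)/(4βρ²))` for all `t ≥ 1`. -/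
theorem stmt_2 (β σ ρ C α : ℝ) (hβ : 0 < β) (hσ : 0 < σ) (hρ : 0 < ρ) (hC : 0 < C)
    (hσβ : σ ≤ 2 * β * ρ ^ 2) (hα : α = σ / (2 * β * ρ ^ 2))
    (h : ℕ → ℝ) (hnonneg : ∀ t, 0 ≤ h t) (h1 : h 1 ≤ C)
    (hrec : ∀ t : ℕ, 1 ≤ t →
      h t ≤ C * exp (-(σ * ((t : ℝ) - 1)) / (4 * β * ρ ^ 2)) →
      h (t + 1) ≤ (1 - α) * h t +
        (α ^ 2 * β * ρ ^ 2 / σ) * C * exp (-(σ * ((t : ℝ) - 1)) / (4 * β * ρ ^ 2))) :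
    ∀ t : ℕ, 1 ≤ t → h t ≤ C * exp (-(σ * ((t : ℝ) - 1)) / (4 * β * ρ ^ 2)) :=
  stmt_2_general β σ ρ C α hσ hC hσβ hα h h1 hrec
end

section
/- Under the conditions of the linearly-convergent conditional gradient algorithm (f β-smooth and σ-strongly convex over polytope P, local linear oracle with parameter ρ, step size α = σ/(2βρ²), radii r_t² = (C/σ)e^{-σ(t-1)/(4βρ²)}), after t iterations the iterate x_{t+1} satisfies f(x_{t+1}) - f(x*) ≤ C·e^{-σt/(4βρ²)}, where C ≥ f(x_1) - f(x*). -/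
/-!
Strong convexity and first-order optimality give `σ‖xₜ - x*‖² ≤ f xₜ - f x* ≤ εₜ`, so `x*` lies
in the oracle ball of radius `rₜ` and the oracle point `pₜ` beats `x*` on the linear model.
Since also `‖xₜ - pₜ‖ ≤ ρ rₜ`, smoothness gives
`f xₜ₊₁ - f x* ≤ (1 - α) εₜ + β α² ρ² εₜ / σ = (1 - α / 2) εₜ ≤ e^{-α/2} εₜ`,
and `e^{-α/2}` is exactly the ratio `εₜ₊₁ / εₜ` of the prescribed error bounds.
-/

open Real Filter Set Topology
open scoped RealInnerProductSpace

theorem nonneg_of_forall_nonneg_add_mul {a K : ℝ}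
    (h : ∀ s : ℝ, 0 < s → s ≤ 1 → 0 ≤ a + s * K) : 0 ≤ a := by
  have hlim : Tendsto (fun s : ℝ => a + s * K) (𝓝[>] 0) (𝓝 a) := by
    have : Tendsto (fun s : ℝ => a + s * K) (𝓝 0) (𝓝 (a + 0 * K)) :=
      tendsto_const_nhds.add (tendsto_id.mul_const K)
    simpa using this.mono_left nhdsWithin_le_nhds
  refine ge_of_tendsto hlim ?_
  filter_upwards [Ioc_mem_nhdsGT one_pos] with s hs using h s hs.1 hs.2

section

variable {E : Type*} [NormedAddCommGroup E] [InnerProductSpace ℝ E] {P : Set E} {f : E → ℝ}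

theorem inner_sub_nonneg_of_isMinOn (hP : Convex ℝ P) {xs v : E} (hxs : xs ∈ P)
    (hmin : ∀ y ∈ P, f xs ≤ f y) {β : ℝ}
    (hsmooth : ∀ y ∈ P, f y ≤ f xs + ⟪v, y - xs⟫ + β * ‖xs - y‖ ^ 2) {y : E} (hy : y ∈ P) :
    0 ≤ ⟪v, y - xs⟫ := by
  refine nonneg_of_forall_nonneg_add_mul (K := β * ‖y - xs‖ ^ 2) fun s hs0 hs1 => ?_
  have hz : xs + s • (y - xs) ∈ P := hP.add_smul_sub_mem hxs hy ⟨hs0.le, hs1⟩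
  have hnorm : ‖xs - (xs + s • (y - xs))‖ ^ 2 = s ^ 2 * ‖y - xs‖ ^ 2 := by
    rw [sub_add_cancel_left, norm_neg, norm_smul, mul_pow, Real.norm_eq_abs, sq_abs]
  have h := (hmin _ hz).trans (hsmooth _ hz)
  rw [add_sub_cancel_left, real_inner_smul_right, hnorm] at h
  rw [← mul_nonneg_iff_of_pos_left hs0]
  linarith

theorem mul_sq_norm_sub_le_of_isMinOn (hP : Convex ℝ P) {xs v : E} (hxs : xs ∈ P)
    (hmin : ∀ y ∈ P, f xs ≤ f y) {β σ : ℝ}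
    (hsmooth : ∀ y ∈ P, f y ≤ f xs + ⟪v, y - xs⟫ + β * ‖xs - y‖ ^ 2)
    (hstrong : ∀ y ∈ P, f y ≥ f xs + ⟪v, y - xs⟫ + σ * ‖xs - y‖ ^ 2) {y : E} (hy : y ∈ P) :
    σ * ‖y - xs‖ ^ 2 ≤ f y - f xs := by
  have hopt := inner_sub_nonneg_of_isMinOn hP hxs hmin hsmooth hy
  have hy' := hstrong y hy
  rw [norm_sub_rev] at hy'
  linarith

theorem inner_sub_le_sub_of_localOracle {xs x p v : E} {σ r : ℝ} (hσ : 0 ≤ σ) (hxs : xs ∈ P)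
    (hstrong : f xs ≥ f x + ⟪v, xs - x⟫ + σ * ‖x - xs‖ ^ 2) (hdist : ‖x - xs‖ ≤ r)
    (hllo : ∀ y ∈ P, ‖x - y‖ ≤ r → ⟪v, p⟫ ≤ ⟪v, y⟫) :
    ⟪v, p - x⟫ ≤ f xs - f x := by
  have hp := hllo xs hxs hdist
  have hsq : 0 ≤ σ * ‖x - xs‖ ^ 2 := by positivity
  rw [inner_sub_right] at hstrong ⊢
  linarith

theorem sub_le_of_add_smul_sub (hP : Convex ℝ P) {x p xs v : E} {α β ε R : ℝ} (hβ : 0 ≤ β)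
    (hα0 : 0 ≤ α) (hα1 : α ≤ 1) (hx : x ∈ P) (hp : p ∈ P)
    (hsmooth : ∀ y ∈ P, f y ≤ f x + ⟪v, y - x⟫ + β * ‖x - y‖ ^ 2)
    (hdesc : ⟪v, p - x⟫ ≤ f xs - f x) (hR : ‖x - p‖ ^ 2 ≤ R) (hε : f x - f xs ≤ ε) :
    f (x + α • (p - x)) - f xs ≤ (1 - α) * ε + β * α ^ 2 * R := by
  have h := hsmooth _ (hP.add_smul_sub_mem hx hp ⟨hα0, hα1⟩)
  have hnorm : ‖x - (x + α • (p - x))‖ ^ 2 = α ^ 2 * ‖x - p‖ ^ 2 := by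
    rw [sub_add_cancel_left, norm_neg, norm_smul, mul_pow, Real.norm_eq_abs, sq_abs,
      norm_sub_rev]
  rw [add_sub_cancel_left, real_inner_smul_right, hnorm] at h
  have h1 : α * ⟪v, p - x⟫ ≤ α * (f xs - f x) := mul_le_mul_of_nonneg_left hdesc hα0
  have h2 : (1 - α) * (f x - f xs) ≤ (1 - α) * ε := mul_le_mul_of_nonneg_left hε (by linarith)
  have h3 : β * (α ^ 2 * ‖x - p‖ ^ 2) ≤ β * α ^ 2 * R := by
    rw [← mul_assoc]; exact mul_le_mul_of_nonneg_left hR (by positivity)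
  linarith

theorem localOracle_step_mem_and_sub_le (hP : Convex ℝ P) {g : E → E} {β σ ρ D α ε r : ℝ} (hβ : 0 < β)
    (hσ : 0 < σ) (hσβ : σ ≤ 2 * β * ρ ^ 2) (hρ : 0 ≤ ρ) (hα : α = σ / (2 * β * ρ ^ 2))
    (hD : ∀ a ∈ P, ∀ b ∈ P, ‖a - b‖ ≤ D)
    (hsmooth : ∀ x ∈ P, ∀ y ∈ P, f y ≤ f x + ⟪g x, y - x⟫ + β * ‖x - y‖ ^ 2)
    (hstrong : ∀ x ∈ P, ∀ y ∈ P, f y ≥ f x + ⟪g x, y - x⟫ + σ * ‖x - y‖ ^ 2)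
    {xs x p : E} (hxs : xs ∈ P) (hmin : ∀ y ∈ P, f xs ≤ f y) (hx : x ∈ P) (hp : p ∈ P)
    (hε : f x - f xs ≤ ε) (hr : r = min (√(ε / σ)) D)
    (hllo1 : ∀ y ∈ P, ‖x - y‖ ≤ r → ⟪g x, p⟫ ≤ ⟪g x, y⟫) (hllo2 : ‖x - p‖ ≤ ρ * r) :
    x + α • (p - x) ∈ P ∧ f (x + α • (p - x)) - f xs ≤ exp (-(α / 2)) * ε := by
  have hden : 0 < 2 * β * ρ ^ 2 := hσ.trans_le hσβ
  have hα0 : 0 ≤ α := hα ▸ by positivity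
  have hα1 : α ≤ 1 := by rw [hα, div_le_one hden]; exact hσβ
  have hgrowth : σ * ‖x - xs‖ ^ 2 ≤ f x - f xs :=
    mul_sq_norm_sub_le_of_isMinOn hP hxs hmin (hsmooth xs hxs) (hstrong xs hxs) hx
  have hε0 : 0 ≤ ε := (sub_nonneg.2 (hmin x hx)).trans hε
  have hdist : ‖x - xs‖ ≤ r := hr ▸ le_min
    (Real.le_sqrt_of_sq_le ((le_div_iff₀' hσ).2 (hgrowth.trans hε))) (hD x hx xs hxs)
  have hR : ‖x - p‖ ^ 2 ≤ ρ ^ 2 * (ε / σ) := by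
    have : ‖x - p‖ ≤ ρ * √(ε / σ) :=
      hllo2.trans (mul_le_mul_of_nonneg_left (hr ▸ min_le_left _ _) hρ)
    calc ‖x - p‖ ^ 2 ≤ (ρ * √(ε / σ)) ^ 2 := pow_le_pow_left₀ (norm_nonneg _) this 2
      _ = ρ ^ 2 * (ε / σ) := by rw [mul_pow, sq_sqrt (by positivity)]
  have hdesc : ⟪g x, p - x⟫ ≤ f xs - f x :=
    inner_sub_le_sub_of_localOracle hσ.le hxs (hstrong x hx xs hxs) hdist hllo1
  refine ⟨hP.add_smul_sub_mem hx hp ⟨hα0, hα1⟩, ?_⟩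
  calc f (x + α • (p - x)) - f xs ≤ (1 - α) * ε + β * α ^ 2 * (ρ ^ 2 * (ε / σ)) :=
        sub_le_of_add_smul_sub hP hβ.le hα0 hα1 hx hp (hsmooth x hx) hdesc hR hε
    _ = (1 - α / 2) * ε := by rw [hα]; field_simp; ring
    _ ≤ exp (-(α / 2)) * ε := by gcongr; linarith [add_one_le_exp (-(α / 2))]

end

theorem stmt_3_general {n : ℕ} (P : Set (EuclideanSpace ℝ (Fin n))) (hP : Convex ℝ P)
    (f : EuclideanSpace ℝ (Fin n) → ℝ) (g : EuclideanSpace ℝ (Fin n) → EuclideanSpace ℝ (Fin n))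
    (β σ ρ C D α : ℝ) (hβ : 0 < β) (hσ : 0 < σ) (hσβ : σ ≤ 2 * β * ρ ^ 2) (hρ : 1 ≤ ρ)
    (hD : ∀ a ∈ P, ∀ b ∈ P, ‖a - b‖ ≤ D)
    (hsmooth : ∀ x ∈ P, ∀ y ∈ P, f y ≤ f x + ⟪g x, y - x⟫ + β * ‖x - y‖ ^ 2)
    (hstrong : ∀ x ∈ P, ∀ y ∈ P, f y ≥ f x + ⟪g x, y - x⟫ + σ * ‖x - y‖ ^ 2)
    (xs : EuclideanSpace ℝ (Fin n)) (hxs : xs ∈ P) (hmin : ∀ y ∈ P, f xs ≤ f y)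
    (x p : ℕ → EuclideanSpace ℝ (Fin n)) (r : ℕ → ℝ)
    (hx1 : x 1 ∈ P) (hC : C ≥ f (x 1) - f xs)
    (hα : α = σ / (2 * β * ρ ^ 2))
    (hr : ∀ t : ℕ, 1 ≤ t →
      r t = min (Real.sqrt ((C / σ) * exp (-(σ * ((t : ℝ) - 1)) / (4 * β * ρ ^ 2)))) D)
    -- the local linear oracle guarantees at each step:
    (hpP : ∀ t : ℕ, 1 ≤ t → p t ∈ P)
    (hllo1 : ∀ t : ℕ, 1 ≤ t → ∀ y ∈ P, ‖x t - y‖ ≤ r t →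
      ⟪g (x t), p t⟫ ≤ ⟪g (x t), y⟫)
    (hllo2 : ∀ t : ℕ, 1 ≤ t → ‖x t - p t‖ ≤ ρ * r t)
    (hupd : ∀ t : ℕ, 1 ≤ t → x (t + 1) = x t + α • (p t - x t)) :
    ∀ t : ℕ, 1 ≤ t →
      f (x (t + 1)) - f xs ≤ C * exp (-(σ * (t : ℝ)) / (4 * β * ρ ^ 2)) := by
  have hρ0 : 0 ≤ ρ := zero_le_one.trans hρ
  have hbound : ∀ t : ℕ, 1 ≤ t →
      x t ∈ P ∧ f (x t) - f xs ≤ C * exp (-(σ * ((t : ℝ) - 1)) / (4 * β * ρ ^ 2)) := by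
    intro t ht
    induction t, ht using Nat.le_induction with
    | base => exact ⟨hx1, by simpa using hC⟩
    | succ t ht ih =>
      have hstep := localOracle_step_mem_and_sub_le hP hβ hσ hσβ hρ0 hα hD hsmooth hstrong hxs hmin ih.1
        (hpP t ht) ih.2 (by rw [hr t ht, div_mul_eq_mul_div]) (hllo1 t ht) (hllo2 t ht)
      rw [hupd t ht]
      refine hstep.imp_right fun h => h.trans_eq ?_
      rw [mul_left_comm, ← exp_add, hα]
      congr 2
      push_cast
      field_simp
      ring
  intro t ht
  simpa using (hbound (t + 1) (by omega)).2

/-- Linear convergence of the conditional gradient algorithm with a local linear oracle: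
if `f` is `β`-smooth and `σ`-strongly convex on the polytope `P`, the iterates satisfy
`x (t+1) = x t + α • (p t - x t)` where `p t` is the output of a local linear oracle with
parameter `ρ` queried at `(x t, r t, ∇f (x t))`, `α = σ/(2βρ²)` and
`r t = min (√((C/σ) e^{-σ(t-1)/(4βρ²)})) D`, then for every `t ≥ 1`,
`f (x (t+1)) - f xs ≤ C * exp (-σ t / (4βρ²))`. -/
theorem stmt_3 {n : ℕ} (P : Set (EuclideanSpace ℝ (Fin n))) (hP : Convex ℝ P)
    (hPc : IsCompact P) (hPne : P.Nonempty)
    (f : EuclideanSpace ℝ (Fin n) → ℝ) (g : EuclideanSpace ℝ (Fin n) → EuclideanSpace ℝ (Fin n))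
    (β σ ρ C D α : ℝ) (hβ : 0 < β) (hσ : 0 < σ) (hσβ : σ ≤ 2 * β * ρ ^ 2) (hρ : 1 ≤ ρ)
    (hD : ∀ a ∈ P, ∀ b ∈ P, ‖a - b‖ ≤ D)
    (hsmooth : ∀ x ∈ P, ∀ y ∈ P, f y ≤ f x + ⟪g x, y - x⟫ + β * ‖x - y‖ ^ 2)
    (hstrong : ∀ x ∈ P, ∀ y ∈ P, f y ≥ f x + ⟪g x, y - x⟫ + σ * ‖x - y‖ ^ 2)
    (xs : EuclideanSpace ℝ (Fin n)) (hxs : xs ∈ P) (hmin : ∀ y ∈ P, f xs ≤ f y)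
    (x p : ℕ → EuclideanSpace ℝ (Fin n)) (r : ℕ → ℝ)
    (hx1 : x 1 ∈ P) (hC : C ≥ f (x 1) - f xs) (hCpos : 0 < C)
    (hα : α = σ / (2 * β * ρ ^ 2))
    (hr : ∀ t : ℕ, 1 ≤ t →
      r t = min (Real.sqrt ((C / σ) * exp (-(σ * ((t : ℝ) - 1)) / (4 * β * ρ ^ 2)))) D)
    -- the local linear oracle guarantees at each step:
    (hpP : ∀ t : ℕ, 1 ≤ t → p t ∈ P)
    (hllo1 : ∀ t : ℕ, 1 ≤ t → ∀ y ∈ P, ‖x t - y‖ ≤ r t →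
      ⟪g (x t), p t⟫ ≤ ⟪g (x t), y⟫)
    (hllo2 : ∀ t : ℕ, 1 ≤ t → ‖x t - p t‖ ≤ ρ * r t)
    (hupd : ∀ t : ℕ, 1 ≤ t → x (t + 1) = x t + α • (p t - x t)) :
    ∀ t : ℕ, 1 ≤ t →
      f (x (t + 1)) - f xs ≤ C * exp (-(σ * (t : ℝ)) / (4 * β * ρ ^ 2)) :=
  stmt_3_general P hP f g β σ ρ C D α hβ hσ hσβ hρ hD hsmooth hstrong xs hxs hmin x p r hx1 hC hα hr
    hpP hllo1 hllo2 hupd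
end

section
/- Let z ∈ P = {x : A₁x = b₁, A₂x ≤ b₂}, C(z) = {i : A₂(i)z = b₂(i)}, and C₀(z) ⊆ C(z) such that the rows {A₂(i)}_{i∈C₀(z)} form a basis of span{A₂(i)}_{i∈C(z)}. If y ∈ P satisfies A₂(i)y < b₂(i) for some i ∈ C(z), then there exists i₀ ∈ C₀(z) with A₂(i₀)y < b₂(i₀). -/
/-!
If every row indexed by `C₀` were tight at `y`, all of them would take the same value at `y` as
at `z`; by linearity so would every row in their span, which contains the row `i` tight at `z`,
contradicting `A₂(i) y < b₂(i)`.
-/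

open Matrix Submodule

theorem dotProduct_eq_of_mem_span {ι R : Type*} [Fintype ι] [CommSemiring R]
    {S : Set (ι → R)} {x y v : ι → R} (hS : ∀ w ∈ S, w ⬝ᵥ x = w ⬝ᵥ y)
    (hv : v ∈ span R S) : v ⬝ᵥ x = v ⬝ᵥ y := by
  induction hv using span_induction with
  | mem w hw => exact hS w hw
  | zero => simp only [zero_dotProduct]
  | add u w _ _ hu hw => simp only [add_dotProduct, hu, hw]
  | smul c w _ hw => simp only [smul_dotProduct, hw]

theorem stmt_5_general {n m₁ m : ℕ}
    (A₁ : Fin m₁ → Fin n → ℝ) (b₁ : Fin m₁ → ℝ)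
    (A₂ : Fin m → Fin n → ℝ) (b₂ : Fin m → ℝ)
    (P : Set (Fin n → ℝ))
    (hP : P = {x | (∀ i, ∑ k, A₁ i k * x k = b₁ i) ∧ (∀ j, ∑ k, A₂ j k * x k ≤ b₂ j)})
    (z : Fin n → ℝ)
    (Cz C₀ : Set (Fin m))
    (hCz : Cz = {j | ∑ k, A₂ j k * z k = b₂ j})
    (hC₀ : C₀ ⊆ Cz)
    (hspan : Submodule.span ℝ (A₂ '' Cz) = Submodule.span ℝ (A₂ '' C₀))
    (y : Fin n → ℝ) (hy : y ∈ P)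
    (i : Fin m) (hi : i ∈ Cz) (hstrict : ∑ k, A₂ i k * y k < b₂ i) :
    ∃ i₀ ∈ C₀, ∑ k, A₂ i₀ k * y k < b₂ i₀ := by
  subst hP hCz
  by_contra! htight
  have hbasis_tight : ∀ w ∈ A₂ '' C₀, w ⬝ᵥ y = w ⬝ᵥ z := by
    rintro _ ⟨j, hj, rfl⟩
    exact (le_antisymm (hy.2 j) (htight j hj)).trans (hC₀ hj).symm
  have hi_tight : A₂ i ⬝ᵥ y = A₂ i ⬝ᵥ z :=
    dotProduct_eq_of_mem_span hbasis_tight (hspan ▸ subset_span ⟨i, hi, rfl⟩)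
  have hiz : A₂ i ⬝ᵥ z = b₂ i := hi
  exact hstrict.ne (hi_tight.trans hiz)

/-- Let `z ∈ P = {x : A₁x = b₁, A₂x ≤ b₂}`, `C(z) = {i : A₂(i)z = b₂(i)}`, and
`C₀(z) ⊆ C(z)` such that the rows `{A₂(i)}_{i ∈ C₀(z)}` are linearly independent and span
the same subspace as `{A₂(i)}_{i ∈ C(z)}`. If `y ∈ P` satisfies `A₂(i)y < b₂(i)` for some
`i ∈ C(z)`, then there exists `i₀ ∈ C₀(z)` with `A₂(i₀)y < b₂(i₀)`. -/
theorem stmt_5 {n m₁ m : ℕ}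
    (A₁ : Fin m₁ → Fin n → ℝ) (b₁ : Fin m₁ → ℝ)
    (A₂ : Fin m → Fin n → ℝ) (b₂ : Fin m → ℝ)
    (P : Set (Fin n → ℝ))
    (hP : P = {x | (∀ i, ∑ k, A₁ i k * x k = b₁ i) ∧ (∀ j, ∑ k, A₂ j k * x k ≤ b₂ j)})
    (z : Fin n → ℝ) (hz : z ∈ P)
    (Cz C₀ : Set (Fin m))
    (hCz : Cz = {j | ∑ k, A₂ j k * z k = b₂ j})
    (hC₀ : C₀ ⊆ Cz)
    (hindep : LinearIndependent ℝ (fun j : C₀ => A₂ j))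
    (hspan : Submodule.span ℝ (A₂ '' Cz) = Submodule.span ℝ (A₂ '' C₀))
    (y : Fin n → ℝ) (hy : y ∈ P)
    (i : Fin m) (hi : i ∈ Cz) (hstrict : ∑ k, A₂ i k * y k < b₂ i) :
    ∃ i₀ ∈ C₀, ∑ k, A₂ i₀ k * y k < b₂ i₀ :=
  stmt_5_general A₁ b₁ A₂ b₂ P hP z Cz C₀ hCz hC₀ hspan y hy i hi hstrict
end

section
/- Let x = Σᵢ λᵢvᵢ be a convex combination of vertices of polytope P and y ∈ P. Write y = Σᵢ(λᵢ - Δᵢ)vᵢ + (ΣᵢΔᵢ)z with Δᵢ ∈ [0, λᵢ], z ∈ P, minimizing ΣᵢΔᵢ. Then for every i with Δᵢ > 0, there exists a row index j with A₂(j)vᵢ < b₂(j) and A₂(j)z = b₂(j). -/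
/-!
Suppose `Δᵢ > 0` but every inequality that is slack at `vᵢ` is also slack at `z`. Then `z`
can be pushed a little further away from `vᵢ` without leaving `P`: tight constraints at `z`
are tight at `vᵢ` too, so they stay tight along the line, and slack ones stay slack for a
short while. Taking `z' = z + (ε / (S - ε)) (z - vᵢ)` with `S = Σ Δ` and returning mass `ε`
from `z` to `vᵢ` represents `y` with total mass `S - ε`, contradicting minimality.
-/

open Filter Topology

section Polyhedron

variable {ι κ E : Type*} [AddCommGroup E] [Module ℝ E]

def polyhedron (f : ι → E →ₗ[ℝ] ℝ) (b : ι → ℝ) (g : κ → E →ₗ[ℝ] ℝ) (c : κ → ℝ) : Set E :=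
  {x | (∀ i, f i x = b i) ∧ ∀ j, g j x ≤ c j}

lemma LinearMap.apply_add_smul_sub (φ : E →ₗ[ℝ] ℝ) (v z : E) (t : ℝ) :
    φ (z + t • (z - v)) = φ z + t * (φ z - φ v) := by
  simp only [map_add, map_smul, map_sub, smul_eq_mul]

lemma eventually_apply_add_smul_sub_le {φ : E →ₗ[ℝ] ℝ} {c : ℝ} {v z : E} (hv : φ v ≤ c)
    (hz : φ z ≤ c) (hslack : φ v < c → φ z < c) : ∀ᶠ t in 𝓝 (0 : ℝ), φ (z + t • (z - v)) ≤ c := by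
  simp only [φ.apply_add_smul_sub]
  rcases hv.lt_or_eq with hv | hv
  · have hcont : Tendsto (fun t : ℝ => φ z + t * (φ z - φ v)) (𝓝 0) (𝓝 (φ z)) := by
      simpa using ((continuous_id.mul continuous_const).const_add (φ z)).tendsto (0 : ℝ)
    exact (hcont.eventually_lt_const (hslack hv)).mono fun _ => le_of_lt
  · filter_upwards [Ioi_mem_nhds (neg_one_lt_zero : (-1 : ℝ) < 0)] with t ht
    rw [hv]
    nlinarith [mul_nonneg (sub_nonneg.mpr hz) (show 0 ≤ 1 + t by linarith [Set.mem_Ioi.mp ht])]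

lemma eventually_add_smul_sub_mem_polyhedron [Finite κ] {f : ι → E →ₗ[ℝ] ℝ} {b : ι → ℝ}
    {g : κ → E →ₗ[ℝ] ℝ} {c : κ → ℝ} {v z : E} (hv : v ∈ polyhedron f b g c)
    (hz : z ∈ polyhedron f b g c) (hslack : ∀ j, g j v < c j → g j z < c j) :
    ∀ᶠ t in 𝓝 (0 : ℝ), z + t • (z - v) ∈ polyhedron f b g c := by
  have hineq : ∀ᶠ t in 𝓝 (0 : ℝ), ∀ j, g j (z + t • (z - v)) ≤ c j :=
    eventually_all.mpr fun j => eventually_apply_add_smul_sub_le (hv.2 j) (hz.2 j) (hslack j)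
  filter_upwards [hineq] with t ht
  refine ⟨fun i => ?_, ht⟩
  rw [LinearMap.apply_add_smul_sub, hv.1 i, hz.1 i, sub_self, mul_zero, add_zero]

end Polyhedron

section Exchange

variable {ι : Type*} [DecidableEq ι]

lemma sum_sub_pi_single [Fintype ι] (Δ : ι → ℝ) (i : ι) (ε : ℝ) :
    ∑ j, (Δ - Pi.single i ε : ι → ℝ) j = ∑ j, Δ j - ε := by
  simp [Finset.sum_sub_distrib, Finset.sum_pi_single']

lemma sub_pi_single_mem_Icc {lam Δ : ι → ℝ} (hΔ : ∀ j, Δ j ∈ Set.Icc 0 (lam j)) {i : ι} {ε : ℝ}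
    (hε : 0 ≤ ε) (hεΔ : ε ≤ Δ i) (j : ι) : (Δ - Pi.single i ε : ι → ℝ) j ∈ Set.Icc 0 (lam j) := by
  rcases eq_or_ne j i with rfl | hj
  · simpa using ⟨hεΔ, by linarith [(hΔ j).2]⟩
  · simpa [hj] using hΔ j

lemma sum_sub_smul_add_sum_smul_eq_of_exchange {E : Type*} [Fintype ι] [AddCommGroup E]
    [Module ℝ E] (lam Δ : ι → ℝ) (v : ι → E) (z : E) (i : ι)
    {ε : ℝ} (hε : ε ≠ ∑ j, Δ j) :
    ∑ j, (lam j - Δ j) • v j + (∑ j, Δ j) • z =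
      ∑ j, (lam j - (Δ - Pi.single i ε : ι → ℝ) j) • v j +
        (∑ j, (Δ - Pi.single i ε : ι → ℝ) j) • (z + (ε / (∑ j, Δ j - ε)) • (z - v i)) := by
  have hne : ∑ j, Δ j - ε ≠ 0 := sub_ne_zero.mpr hε.symm
  have hsumv : ∑ j, (lam j - (Δ - Pi.single i ε : ι → ℝ) j) • v j =
      ∑ j, (lam j - Δ j) • v j + ε • v i := by
    simp only [Pi.sub_apply, sub_sub_eq_add_sub, add_sub_right_comm _ _ (Δ _), add_smul,
      Finset.sum_add_distrib, Pi.single_apply, ite_smul, zero_smul, Finset.sum_ite_eq',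
      Finset.mem_univ, if_true]
  rw [sum_sub_pi_single, hsumv, smul_add, smul_smul, mul_div_cancel₀ _ hne]
  module

end Exchange

lemma tendsto_div_const_sub_nhds_zero {S : ℝ} (hS : S ≠ 0) :
    Tendsto (fun ε => ε / (S - ε)) (𝓝 0) (𝓝 0) := by
  have hcont : ContinuousAt (fun ε => ε / (S - ε)) 0 :=
    continuousAt_id.div (continuousAt_const.sub continuousAt_id) (by simpa using hS)
  simpa using hcont.tendsto

noncomputable def rowFunctional {n : ℕ} (a : Fin n → ℝ) : EuclideanSpace ℝ (Fin n) →ₗ[ℝ] ℝ :=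
  (∑ l, a l • EuclideanSpace.proj l : EuclideanSpace ℝ (Fin n) →L[ℝ] ℝ)

@[simp]
lemma rowFunctional_apply {n : ℕ} (a : Fin n → ℝ) (x : EuclideanSpace ℝ (Fin n)) :
    rowFunctional a x = ∑ l, a l * x l := by
  simp [rowFunctional]

theorem stmt_6_general {n m₁ m : ℕ} {k : ℕ}
    (A₁ : Fin m₁ → Fin n → ℝ) (b₁ : Fin m₁ → ℝ)
    (A₂ : Fin m → Fin n → ℝ) (b₂ : Fin m → ℝ)
    (P : Set (EuclideanSpace ℝ (Fin n)))
    (hP : P = {x | (∀ i, ∑ l, A₁ i l * x l = b₁ i) ∧ (∀ j, ∑ l, A₂ j l * x l ≤ b₂ j)})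
    (v : Fin k → EuclideanSpace ℝ (Fin n)) (hv : ∀ i, v i ∈ Set.extremePoints ℝ P)
    (lam : Fin k → ℝ)
    (x : EuclideanSpace ℝ (Fin n))
    (y : EuclideanSpace ℝ (Fin n))
    (Δ : Fin k → ℝ) (z : EuclideanSpace ℝ (Fin n)) (hzP : z ∈ P)
    (hΔ : ∀ i, Δ i ∈ Set.Icc 0 (lam i))
    (hdecomp : y = ∑ i, (lam i - Δ i) • v i + (∑ i, Δ i) • z)
    (hmin : ∀ (Δ' : Fin k → ℝ) (z' : EuclideanSpace ℝ (Fin n)), z' ∈ P →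
      (∀ i, Δ' i ∈ Set.Icc 0 (lam i)) →
      y = ∑ i, (lam i - Δ' i) • v i + (∑ i, Δ' i) • z' →
      ∑ i, Δ i ≤ ∑ i, Δ' i) :
    ∀ i, 0 < Δ i →
      ∃ j, (∑ l, A₂ j l * (v i) l < b₂ j) ∧ (∑ l, A₂ j l * z l = b₂ j) := by
  intro i hΔi
  by_contra! hcon
  set S := ∑ j, Δ j
  have hΔS : Δ i ≤ S := Finset.single_le_sum (fun j _ => (hΔ j).1) (Finset.mem_univ i)
  have hPpoly : P = polyhedron (rowFunctional ∘ A₁) b₁ (rowFunctional ∘ A₂) b₂ := by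
    rw [hP]; ext; simp [polyhedron]
  have hviP : v i ∈ P := (hv i).1
  have hnear : ∀ᶠ t in 𝓝 (0 : ℝ), z + t • (z - v i) ∈ P := by
    rw [hPpoly] at hviP hzP ⊢
    exact eventually_add_smul_sub_mem_polyhedron hviP hzP fun j hj =>
      (hzP.2 j).lt_of_ne (by simpa using hcon j (by simpa using hj))
  have hrate := tendsto_div_const_sub_nhds_zero (S := S) (by linarith)
  have hsmall : ∀ᶠ ε in 𝓝[>] (0 : ℝ),
      0 < ε ∧ ε < Δ i ∧ z + (ε / (S - ε)) • (z - v i) ∈ P := by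
    filter_upwards [eventually_mem_nhdsWithin, nhdsWithin_le_nhds (Iio_mem_nhds hΔi),
      nhdsWithin_le_nhds (hrate.eventually hnear)] with ε hε0 hεΔ hz'
    exact ⟨hε0, hεΔ, hz'⟩
  obtain ⟨ε, hε0, hεΔ, hz'⟩ := hsmall.exists
  have hle := hmin _ _ hz' (sub_pi_single_mem_Icc hΔ hε0.le hεΔ.le) (hdecomp.trans
    (sum_sub_smul_add_sum_smul_eq_of_exchange lam Δ v z i (by linarith : ε ≠ S)))
  rw [sum_sub_pi_single] at hle
  linarith

/-- Minimal-mass decompositions hit tight constraints: let `x = Σᵢ λᵢ vᵢ` be a convex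
combination of vertices of the polytope `P` and `y ∈ P`. Write
`y = Σᵢ (λᵢ - Δᵢ) vᵢ + (Σᵢ Δᵢ) z` with `Δᵢ ∈ [0, λᵢ]` and `z ∈ P`, where `Σᵢ Δᵢ` is
minimal among all such representations. Then for every `i` with `Δᵢ > 0` there exists a
row index `j` with `A₂(j)vᵢ < b₂(j)` and `A₂(j)z = b₂(j)`. -/
theorem stmt_6 {n m₁ m : ℕ} {k : ℕ}
    (A₁ : Fin m₁ → Fin n → ℝ) (b₁ : Fin m₁ → ℝ)
    (A₂ : Fin m → Fin n → ℝ) (b₂ : Fin m → ℝ)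
    (P : Set (EuclideanSpace ℝ (Fin n)))
    (hP : P = {x | (∀ i, ∑ l, A₁ i l * x l = b₁ i) ∧ (∀ j, ∑ l, A₂ j l * x l ≤ b₂ j)})
    (hbdd : Bornology.IsBounded P)
    (v : Fin k → EuclideanSpace ℝ (Fin n)) (hv : ∀ i, v i ∈ Set.extremePoints ℝ P)
    (lam : Fin k → ℝ) (hlam : ∀ i, 0 < lam i) (hlamsum : ∑ i, lam i = 1)
    (x : EuclideanSpace ℝ (Fin n)) (hx : x = ∑ i, lam i • v i)
    (y : EuclideanSpace ℝ (Fin n)) (hy : y ∈ P)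
    (Δ : Fin k → ℝ) (z : EuclideanSpace ℝ (Fin n)) (hzP : z ∈ P)
    (hΔ : ∀ i, Δ i ∈ Set.Icc 0 (lam i))
    (hdecomp : y = ∑ i, (lam i - Δ i) • v i + (∑ i, Δ i) • z)
    (hmin : ∀ (Δ' : Fin k → ℝ) (z' : EuclideanSpace ℝ (Fin n)), z' ∈ P →
      (∀ i, Δ' i ∈ Set.Icc 0 (lam i)) →
      y = ∑ i, (lam i - Δ' i) • v i + (∑ i, Δ' i) • z' →
      ∑ i, Δ i ≤ ∑ i, Δ' i) :
    ∀ i, 0 < Δ i →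
      ∃ j, (∑ l, A₂ j l * (v i) l < b₂ j) ∧ (∑ l, A₂ j l * z l = b₂ j) :=
  stmt_6_general A₁ b₁ A₂ b₂ P hP v hv lam x y Δ z hzP hΔ hdecomp hmin
end

section
/- In the online conditional gradient algorithm for convex losses, with η = √ε/(18Gρ²), α = 1/(3ρ²), r_t = √ε + ηG, and F_t(x) = η Σ_{τ≤t} ∇f_τ(x_τ)ᵀx + ‖x - x_1‖², it holds for all t ∈ [T] that F_{t-1}(x_t) - F_{t-1}(x_t*) ≤ ε and hence ‖x_t - x_t*‖ ≤ √ε, where x_t* = argmin_{x∈P} F_{t-1}(x). -/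
/-!
Every objective `F t` is a linear function plus `‖w - x 1‖²`, hence equal to its own second-order
Taylor expansion with quadratic term `‖d‖²`. Consequently a minimizer `z` of `F t` over a convex
set has quadratic growth, `F t z + ‖y - z‖² ≤ F t y`, so a gap of `ε` puts the iterate within `√ε`
of the minimizer, and adding the linear term `η ⟪g, ·⟫` moves the minimizer by at most `η G`.
Thus the next minimizer lies within the oracle radius `√ε + η G` of the current iterate, the oracle
output does at least as well on the linearization, and the usual conditional gradient step shrinks
the gap by the factor `1 - α` at the price of `α² ρ² r²`. With the chosen `η` and `α` the gap stays
below `ε` by induction.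
-/

open Filter Set Topology
open scoped RealInnerProductSpace

variable {E : Type*} [NormedAddCommGroup E] [InnerProductSpace ℝ E]

-- The paper's "1-smooth and 1-strongly convex with gradient `f'`", with equality as for `F t`.
def HasQuadraticExpansion (f : E → ℝ) (f' : E → E) : Prop :=
  ∀ w d, f (w + d) = f w + ⟪f' w, d⟫ + ‖d‖ ^ 2

theorem hasQuadraticExpansion_inner_add_norm_sub_sq (η : ℝ) (a c : E) :
    HasQuadraticExpansion (fun w => η * ⟪a, w⟫ + ‖w - c‖ ^ 2)
      (fun w => η • a + (2 : ℝ) • (w - c)) := by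
  intro w d
  dsimp only
  rw [show w + d - c = (w - c) + d by abel, norm_add_sq_real]
  simp only [inner_add_right, inner_add_left, real_inner_smul_left]
  ring

namespace HasQuadraticExpansion

variable {f : E → ℝ} {f' : E → E} {s : Set E} {w y z : E}

theorem inner_sub_le (hf : HasQuadraticExpansion f f') (w z : E) :
    ⟪f' w, z - w⟫ ≤ f z - f w := by
  have h := hf w (z - w)
  rw [add_sub_cancel] at h
  linarith [sq_nonneg ‖z - w‖]

theorem inner_nonneg_of_isMinOn (hf : HasQuadraticExpansion f f') (hs : Convex ℝ s)
    (hz : z ∈ s) (hmin : IsMinOn f s z) (hy : y ∈ s) : 0 ≤ ⟪f' z, y - z⟫ := by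
  have hsegment : ∀ l ∈ Ioo (0 : ℝ) 1, 0 ≤ ⟪f' z, y - z⟫ + l * ‖y - z‖ ^ 2 := by
    rintro l ⟨hl₀, hl₁⟩
    have h := isMinOn_iff.1 hmin _ (hs.add_smul_sub_mem hz hy ⟨hl₀.le, hl₁.le⟩)
    rw [hf, real_inner_smul_right, norm_smul, mul_pow, Real.norm_eq_abs, sq_abs] at h
    exact (mul_nonneg_iff_of_pos_left hl₀).1 (by linarith)
  have hlim : Tendsto (fun l : ℝ => ⟪f' z, y - z⟫ + l * ‖y - z‖ ^ 2) (𝓝[>] 0)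
      (𝓝 ⟪f' z, y - z⟫) := by
    have hcont : Continuous fun l : ℝ => ⟪f' z, y - z⟫ + l * ‖y - z‖ ^ 2 := by fun_prop
    simpa using (hcont.tendsto 0).mono_left nhdsWithin_le_nhds
  exact ge_of_tendsto hlim (eventually_of_mem (Ioo_mem_nhdsGT one_pos) hsegment)

theorem add_norm_sub_sq_le_of_isMinOn (hf : HasQuadraticExpansion f f') (hs : Convex ℝ s)
    (hz : z ∈ s) (hmin : IsMinOn f s z) (hy : y ∈ s) : f z + ‖y - z‖ ^ 2 ≤ f y := by
  have h := hf z (y - z)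
  rw [add_sub_cancel] at h
  linarith [hf.inner_nonneg_of_isMinOn hs hz hmin hy]

theorem norm_sub_le_sqrt_of_isMinOn {ε : ℝ} (hf : HasQuadraticExpansion f f') (hs : Convex ℝ s)
    (hz : z ∈ s) (hmin : IsMinOn f s z) (hw : w ∈ s) (hgap : f w - f z ≤ ε) :
    ‖w - z‖ ≤ √ε :=
  Real.le_sqrt_of_sq_le (by linarith [hf.add_norm_sub_sq_le_of_isMinOn hs hz hmin hw])

theorem norm_sub_le_of_isMinOn_add_inner {η : ℝ} {g z₁ : E} (hf : HasQuadraticExpansion f f')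
    (hs : Convex ℝ s) (hz : z ∈ s) (hmin : IsMinOn f s z) (hz₁ : z₁ ∈ s)
    (hmin₁ : IsMinOn (fun w => f w + η * ⟪g, w⟫) s z₁) (hη : 0 ≤ η) :
    ‖z₁ - z‖ ≤ η * ‖g‖ := by
  have hgrowth := hf.add_norm_sub_sq_le_of_isMinOn hs hz hmin hz₁
  have hmin₁z : f z₁ + η * ⟪g, z₁⟫ ≤ f z + η * ⟪g, z⟫ := isMinOn_iff.1 hmin₁ z hz
  have hcs : η * ⟪g, z - z₁⟫ ≤ η * (‖g‖ * ‖z₁ - z‖) :=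
    mul_le_mul_of_nonneg_left ((real_inner_le_norm _ _).trans_eq (by rw [norm_sub_rev])) hη
  rw [inner_sub_right] at hcs
  have hsq : ‖z₁ - z‖ ^ 2 ≤ η * ‖g‖ * ‖z₁ - z‖ := by linarith
  nlinarith [norm_nonneg (z₁ - z), mul_nonneg hη (norm_nonneg g)]

theorem conditionalGradient_step_sub_le {α : ℝ} {p : E} (hf : HasQuadraticExpansion f f')
    (hα : 0 ≤ α) (hp : ⟪f' w, p⟫ ≤ ⟪f' w, z⟫) :
    f (w + α • (p - w)) - f z ≤ (1 - α) * (f w - f z) + α ^ 2 * ‖p - w‖ ^ 2 := by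
  have hdir : ⟪f' w, p - w⟫ ≤ f z - f w := by
    rw [inner_sub_right]
    linarith [inner_sub_right (𝕜 := ℝ) (f' w) z w, hf.inner_sub_le w z]
  rw [hf, real_inner_smul_right, norm_smul, mul_pow, Real.norm_eq_abs, sq_abs]
  linarith [mul_le_mul_of_nonneg_left hdir hα]

theorem tracking_step {f₁ : E → ℝ} {f₁' : E → E} {g z₁ p : E} {η G ε r α : ℝ}
    (hf : HasQuadraticExpansion f f') (hf₁ : HasQuadraticExpansion f₁ f₁')
    (hf₁_eq : ∀ w, f₁ w = f w + η * ⟪g, w⟫) (hs : Convex ℝ s) (hη : 0 ≤ η) (hg : ‖g‖ ≤ G)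
    (hz : z ∈ s) (hmin : IsMinOn f s z) (hz₁ : z₁ ∈ s) (hmin₁ : IsMinOn f₁ s z₁)
    (hw : w ∈ s) (hgap : f w - f z ≤ ε) (hr : √ε + η * G ≤ r)
    (hp : ∀ y ∈ s, ‖w - y‖ ≤ r → ⟪f₁' w, p⟫ ≤ ⟪f₁' w, y⟫) (hα : α ∈ Icc 0 1) :
    f₁ (w + α • (p - w)) - f₁ z₁ ≤ (1 - α) * (ε + η * G * r) + α ^ 2 * ‖p - w‖ ^ 2 := by
  obtain rfl : f₁ = fun w => f w + η * ⟪g, w⟫ := funext hf₁_eq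
  have hwz : ‖w - z‖ ≤ √ε := hf.norm_sub_le_sqrt_of_isMinOn hs hz hmin hw hgap
  have hzz₁ : ‖z₁ - z‖ ≤ η * G :=
    (hf.norm_sub_le_of_isMinOn_add_inner hs hz hmin hz₁ hmin₁ hη).trans
      (mul_le_mul_of_nonneg_left hg hη)
  have hwz₁ : ‖w - z₁‖ ≤ r :=
    calc ‖w - z₁‖ ≤ ‖w - z‖ + ‖z - z₁‖ := norm_sub_le_norm_sub_add_norm_sub _ _ _
      _ ≤ √ε + η * G := add_le_add hwz (by rwa [norm_sub_rev])
      _ ≤ r := hr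
  have hgap₁ : f w + η * ⟪g, w⟫ - (f z₁ + η * ⟪g, z₁⟫) ≤ ε + η * G * r := by
    have hfz : f z ≤ f z₁ := isMinOn_iff.1 hmin _ hz₁
    have hcs : ⟪g, w - z₁⟫ ≤ G * r := (real_inner_le_norm _ _).trans
      (mul_le_mul hg hwz₁ (norm_nonneg _) ((norm_nonneg g).trans hg))
    rw [inner_sub_right] at hcs
    linarith [mul_le_mul_of_nonneg_left hcs hη]
  exact (hf₁.conditionalGradient_step_sub_le hα.1 (hp z₁ hz₁ hwz₁)).trans
    (add_le_add_left (mul_le_mul_of_nonneg_left hgap₁ (sub_nonneg.2 hα.2)) _)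

end HasQuadraticExpansion

theorem conditionalGradient_params_le {G ρ ε η α r : ℝ} (hG : 0 < G) (hρ : 1 ≤ ρ) (hε : 0 ≤ ε)
    (hη : η = √ε / (18 * G * ρ ^ 2)) (hα : α = 1 / (3 * ρ ^ 2)) (hr : r = √ε + η * G) :
    (1 - α) * (ε + η * G * r) + α ^ 2 * (ρ * r) ^ 2 ≤ ε := by
  obtain ⟨s, hs, rfl⟩ : ∃ s, 0 ≤ s ∧ ε = s ^ 2 := ⟨√ε, Real.sqrt_nonneg ε, (Real.sq_sqrt hε).symm⟩
  have hηG : η * G = s / (18 * ρ ^ 2) := by rw [hη, Real.sqrt_sq hs]; field_simp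
  rw [hr, hα, hηG, Real.sqrt_sq hs]
  have hdefect : s ^ 2
      - ((1 - 1 / (3 * ρ ^ 2)) * (s ^ 2 + s / (18 * ρ ^ 2) * (s + s / (18 * ρ ^ 2)))
        + (1 / (3 * ρ ^ 2)) ^ 2 * (ρ * (s + s / (18 * ρ ^ 2))) ^ 2)
      = s ^ 2 * (486 * ρ ^ 4 + 9 * ρ ^ 2 + 2) / (2916 * ρ ^ 6) := by
    field_simp
    ring
  have : 0 ≤ s ^ 2 * (486 * ρ ^ 4 + 9 * ρ ^ 2 + 2) / (2916 * ρ ^ 6) := by positivity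
  linarith

theorem stmt_11_general {n : ℕ} (T : ℕ) (P : Set (EuclideanSpace ℝ (Fin n))) (hP : Convex ℝ P)
    (G ρ ε η α : ℝ) (hG : 0 < G) (hρ : 1 ≤ ρ) (hε : 0 < ε)
    (hη : η = Real.sqrt ε / (18 * G * ρ ^ 2)) (hα : α = 1 / (3 * ρ ^ 2))
    (g : ℕ → EuclideanSpace ℝ (Fin n)) (hg : ∀ t, ‖g t‖ ≤ G)
    (r : ℕ → ℝ) (hr : ∀ t, r t = Real.sqrt ε + η * G)
    (x p xstar : ℕ → EuclideanSpace ℝ (Fin n))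
    (F : ℕ → EuclideanSpace ℝ (Fin n) → ℝ)
    (hF : ∀ t w, F t w = η * (∑ τ ∈ Finset.Icc 1 t, ⟪g τ, w⟫) + ‖w - x 1‖ ^ 2)
    (gradF : ℕ → EuclideanSpace ℝ (Fin n) → EuclideanSpace ℝ (Fin n))
    (hgradF : ∀ t w, gradF t w = η • (∑ τ ∈ Finset.Icc 1 t, g τ) + (2:ℝ) • (w - x 1))
    (hx1 : x 1 ∈ P) (hxstar1 : xstar 1 = x 1)
    -- `xstar (t+1)` minimizes `F t` over `P`:
    (hxstarP : ∀ t : ℕ, 1 ≤ t → xstar (t + 1) ∈ P)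
    (hxstarmin : ∀ t : ℕ, 1 ≤ t → ∀ y ∈ P, F t (xstar (t + 1)) ≤ F t y)
    -- the local linear oracle guarantees at each step:
    (hpP : ∀ t : ℕ, 1 ≤ t → p t ∈ P)
    (hllo1 : ∀ t : ℕ, 1 ≤ t → ∀ y ∈ P, ‖x t - y‖ ≤ r t →
      ⟪gradF t (x t), p t⟫ ≤ ⟪gradF t (x t), y⟫)
    (hllo2 : ∀ t : ℕ, 1 ≤ t → ‖x t - p t‖ ≤ ρ * r t)
    (hupd : ∀ t : ℕ, 1 ≤ t → x (t + 1) = x t + α • (p t - x t)) :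
    ∀ t : ℕ, 1 ≤ t → t ≤ T →
      F (t - 1) (x t) - F (t - 1) (xstar t) ≤ ε ∧ ‖x t - xstar t‖ ≤ Real.sqrt ε := by
  have hη₀ : 0 ≤ η := by rw [hη]; positivity
  have hα₀₁ : α ∈ Icc 0 1 := by
    rw [hα, mem_Icc, div_le_one (by positivity)]
    exact ⟨by positivity, by nlinarith [one_le_pow₀ (n := 2) hρ]⟩
  have hquad : ∀ t, HasQuadraticExpansion (F t) (gradF t) := fun t => by
    rw [show F t = _ from funext fun w => by rw [hF, ← sum_inner], funext (hgradF t)]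
    exact hasQuadraticExpansion_inner_add_norm_sub_sq η _ (x 1)
  have hsucc : ∀ t w, F (t + 1) w = F t w + η * ⟪g (t + 1), w⟫ := fun t w => by
    rw [hF, hF, Finset.sum_Icc_succ_top (by omega)]
    ring
  have hstar : ∀ t, xstar (t + 1) ∈ P ∧ IsMinOn (F t) P (xstar (t + 1)) := by
    rintro (_ | t)
    · exact ⟨hxstar1 ▸ hx1, isMinOn_iff.2 fun y _ => by simp [hF, hxstar1]⟩
    · exact ⟨hxstarP _ (by omega), isMinOn_iff.2 (hxstarmin _ (by omega))⟩
  have hinv : ∀ t, x (t + 1) ∈ P ∧ F t (x (t + 1)) - F t (xstar (t + 1)) ≤ ε := by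
    intro t
    induction t with
    | zero => simp [hF, hxstar1, hx1, hε.le]
    | succ t ih =>
      have hstep := (hquad t).tracking_step (hquad (t + 1)) (hsucc t) hP hη₀ (hg (t + 1))
        (hstar t).1 (hstar t).2 (hstar (t + 1)).1 (hstar (t + 1)).2 ih.1 ih.2 (hr (t + 1)).ge
        (hllo1 (t + 1) (by omega)) hα₀₁
      have hpx : ‖p (t + 1) - x (t + 1)‖ ≤ ρ * r (t + 1) := by
        rw [norm_sub_rev]; exact hllo2 _ (by omega)
      rw [hupd (t + 1) (by omega)]
      refine ⟨hP.add_smul_sub_mem ih.1 (hpP _ (by omega)) hα₀₁, ?_⟩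
      calc _ ≤ _ := hstep
        _ ≤ (1 - α) * (ε + η * G * r (t + 1)) + α ^ 2 * (ρ * r (t + 1)) ^ 2 := by gcongr
        _ ≤ ε := conditionalGradient_params_le hG hρ hε.le hη hα (hr _)
  intro t ht _
  obtain ⟨k, rfl⟩ := Nat.exists_eq_add_of_le' ht
  obtain ⟨hxk, hgap⟩ := hinv k
  rw [Nat.add_sub_cancel]
  exact ⟨hgap, (hquad k).norm_sub_le_sqrt_of_isMinOn hP (hstar k).1 (hstar k).2 hxk hgap⟩

/-- Tracking lemma for the online conditional gradient algorithm with general convex losses: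
with `η = √ε/(18Gρ²)`, `α = 1/(3ρ²)`, `r t = √ε + ηG` and
`F t w = η Σ_{τ ≤ t} ⟪g τ, w⟫ + ‖w - x 1‖²`, the iterates satisfy
`F (t-1) (x t) - F (t-1) (xstar t) ≤ ε` and hence `‖x t - xstar t‖ ≤ √ε` for all `t ∈ [T]`,
where `xstar t` minimizes `F (t-1)` over `P`. -/
theorem stmt_11 {n : ℕ} (T : ℕ) (P : Set (EuclideanSpace ℝ (Fin n))) (hP : Convex ℝ P)
    (hPc : IsCompact P)
    (G ρ ε η α : ℝ) (hG : 0 < G) (hρ : 1 ≤ ρ) (hε : 0 < ε)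
    (hη : η = Real.sqrt ε / (18 * G * ρ ^ 2)) (hα : α = 1 / (3 * ρ ^ 2))
    (g : ℕ → EuclideanSpace ℝ (Fin n)) (hg : ∀ t, ‖g t‖ ≤ G)
    (r : ℕ → ℝ) (hr : ∀ t, r t = Real.sqrt ε + η * G)
    (x p xstar : ℕ → EuclideanSpace ℝ (Fin n))
    (F : ℕ → EuclideanSpace ℝ (Fin n) → ℝ)
    (hF : ∀ t w, F t w = η * (∑ τ ∈ Finset.Icc 1 t, ⟪g τ, w⟫) + ‖w - x 1‖ ^ 2)
    (gradF : ℕ → EuclideanSpace ℝ (Fin n) → EuclideanSpace ℝ (Fin n))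
    (hgradF : ∀ t w, gradF t w = η • (∑ τ ∈ Finset.Icc 1 t, g τ) + (2:ℝ) • (w - x 1))
    (hx1 : x 1 ∈ P) (hxstar1 : xstar 1 = x 1)
    -- `xstar (t+1)` minimizes `F t` over `P`:
    (hxstarP : ∀ t : ℕ, 1 ≤ t → xstar (t + 1) ∈ P)
    (hxstarmin : ∀ t : ℕ, 1 ≤ t → ∀ y ∈ P, F t (xstar (t + 1)) ≤ F t y)
    -- the local linear oracle guarantees at each step:
    (hpP : ∀ t : ℕ, 1 ≤ t → p t ∈ P)
    (hllo1 : ∀ t : ℕ, 1 ≤ t → ∀ y ∈ P, ‖x t - y‖ ≤ r t →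
      ⟪gradF t (x t), p t⟫ ≤ ⟪gradF t (x t), y⟫)
    (hllo2 : ∀ t : ℕ, 1 ≤ t → ‖x t - p t‖ ≤ ρ * r t)
    (hupd : ∀ t : ℕ, 1 ≤ t → x (t + 1) = x t + α • (p t - x t)) :
    ∀ t : ℕ, 1 ≤ t → t ≤ T →
      F (t - 1) (x t) - F (t - 1) (xstar t) ≤ ε ∧ ‖x t - xstar t‖ ≤ Real.sqrt ε :=
  stmt_11_general T P hP G ρ ε η α hG hρ hε hη hα g hg r hr x p xstar F hF gradF hgradF hx1 hxstar1
    hxstarP hxstarmin hpP hllo1 hllo2 hupd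
end

section
/- For f(x) = ‖x - 1⃗‖² - n + 2 on the n-dimensional simplex Δₙ: min over t-sparse points x ∈ Δₙ of f(x) equals 1/t, achieved by the uniform vector on t coordinates, while min_{x∈Δₙ} f(x) = 1/n achieved at x = (1/n)1⃗. Consequently, if x_t ∈ Δₙ satisfies f(x_t) ≤ min_{Δₙ} f + 1/t - 1/n, then ‖x_t‖₀ ≥ t. -/
/-!
On the simplex `f x = ∑ xᵢ²`, and Cauchy–Schwarz on the support of `x` gives
`1 = (∑_{xᵢ ≠ 0} xᵢ)² ≤ ‖x‖₀ · ∑ xᵢ²`, i.e. `f x ≥ 1/‖x‖₀`, with equality for the uniform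
vector on any `s` coordinates, where `f = 1/s`. Both minima and the sparsity bound follow.
-/

open Finset

section SumEqOne

variable {ι : Type*} [Fintype ι] {x : ι → ℝ}

theorem sum_sub_one_sq_of_sum_eq_one (hx : ∑ i, x i = 1) :
    ∑ i, (x i - 1) ^ 2 = ∑ i, x i ^ 2 - 2 + Fintype.card ι := by
  have expand : ∑ i, (x i - 1) ^ 2 = ∑ i, x i ^ 2 - 2 * ∑ i, x i + ∑ _i : ι, (1 : ℝ) := by
    simp only [mul_sum, ← sum_sub_distrib, ← sum_add_distrib]
    exact sum_congr rfl fun i _ => by ring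
  rw [expand, hx, sum_const, card_univ, nsmul_one]
  ring

theorem card_support_pos_of_sum_eq_one (hx : ∑ i, x i = 1) : 0 < #{i | x i ≠ 0} := by
  refine card_pos.mpr (nonempty_iff_ne_empty.mpr fun hempty => ?_)
  rw [← sum_filter_ne_zero, hempty, sum_empty] at hx
  exact zero_ne_one hx

theorem inv_card_support_le_sum_sq (hx : ∑ i, x i = 1) :
    (#{i | x i ≠ 0} : ℝ)⁻¹ ≤ ∑ i, x i ^ 2 := by
  have hsum : ∑ i ∈ {i | x i ≠ 0}, x i = 1 := by rw [sum_filter_ne_zero, hx]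
  have hsq : ∑ i ∈ {i | x i ≠ 0}, x i ^ 2 = ∑ i, x i ^ 2 :=
    sum_subset (subset_univ _) fun i _ hi => by simp_all
  have cauchy_schwarz := sq_sum_le_card_mul_sum_sq (s := {i | x i ≠ 0}) (f := x)
  rw [hsum, hsq, one_pow] at cauchy_schwarz
  have hpos : (0 : ℝ) < #{i | x i ≠ 0} := by exact_mod_cast card_support_pos_of_sum_eq_one hx
  rwa [inv_le_iff_one_le_mul₀' hpos]

theorem inv_le_sum_sq_of_card_support_le {m : ℕ} (hx : ∑ i, x i = 1) (hm : #{i | x i ≠ 0} ≤ m) :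
    (m : ℝ)⁻¹ ≤ ∑ i, x i ^ 2 := by
  have hpos : (0 : ℝ) < #{i | x i ≠ 0} := by exact_mod_cast card_support_pos_of_sum_eq_one hx
  exact (inv_anti₀ hpos (by exact_mod_cast hm)).trans (inv_card_support_le_sum_sq hx)

theorem le_card_support_of_sum_sq_le {m : ℕ} (hm : 0 < m) (hx : ∑ i, x i = 1)
    (hle : ∑ i, x i ^ 2 ≤ (m : ℝ)⁻¹) : m ≤ #{i | x i ≠ 0} := by
  have hpos : (0 : ℝ) < #{i | x i ≠ 0} := by exact_mod_cast card_support_pos_of_sum_eq_one hx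
  have := (inv_le_inv₀ hpos (by exact_mod_cast hm)).mp ((inv_card_support_le_sum_sq hx).trans hle)
  exact_mod_cast this

end SumEqOne

section UniformOn

variable {ι : Type*} [Fintype ι] [DecidableEq ι] (s : Finset ι)

noncomputable def uniformOn : ι → ℝ := fun i => if i ∈ s then (#s : ℝ)⁻¹ else 0

theorem sum_uniformOn_pow {k : ℕ} (hk : k ≠ 0) : ∑ i, uniformOn s i ^ k = #s * (#s : ℝ)⁻¹ ^ k := by
  simp only [uniformOn, ite_pow, zero_pow hk, sum_ite_mem, univ_inter, sum_const, nsmul_eq_mul]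

theorem uniformOn_mem_stdSimplex (hs : s.Nonempty) : uniformOn s ∈ stdSimplex ℝ ι := by
  refine ⟨fun i => by unfold uniformOn; positivity, ?_⟩
  rw [← sum_congr rfl fun i _ => pow_one (uniformOn s i), sum_uniformOn_pow s one_ne_zero,
    pow_one, mul_inv_cancel₀]
  exact_mod_cast hs.card_pos.ne'

theorem sum_sq_uniformOn : ∑ i, uniformOn s i ^ 2 = (#s : ℝ)⁻¹ := by
  rw [sum_uniformOn_pow s two_ne_zero]
  rcases eq_or_ne (#s : ℝ) 0 with h | h
  · simp [h]
  · field_simp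

end UniformOn

open Classical in
/-- Sparsity lower bound for approximate minimizers over the simplex: for
`f x = Σᵢ (xᵢ - 1)² - n + 2` on `Δₙ`, the minimum over `t`-sparse points equals `1/t`
(achieved by the uniform vector on `t` coordinates), the global minimum is `1/n`
(achieved at the uniform vector), and consequently any `x ∈ Δₙ` with
`f x ≤ min f + 1/t - 1/n` satisfies `‖x‖₀ ≥ t`. -/
theorem stmt_18 (n t : ℕ) (ht : 1 ≤ t) (htn : t ≤ n)
    (simplex : Set (Fin n → ℝ))
    (hsimplex : simplex = {x : Fin n → ℝ | (∀ i, 0 ≤ x i) ∧ ∑ i, x i = 1})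
    (f : (Fin n → ℝ) → ℝ)
    (hf : ∀ x, f x = (∑ i, (x i - 1) ^ 2) - n + 2)
    (xt : Fin n → ℝ) (hxt : ∀ i : Fin n, xt i = if (i : ℕ) < t then (t : ℝ)⁻¹ else 0)
    (xunif : Fin n → ℝ) (hxunif : ∀ i : Fin n, xunif i = (n : ℝ)⁻¹) :
    (∀ x ∈ simplex, (Finset.univ.filter fun i => x i ≠ 0).card ≤ t → (t : ℝ)⁻¹ ≤ f x) ∧
    (xt ∈ simplex ∧ f xt = (t : ℝ)⁻¹) ∧
    (∀ x ∈ simplex, (n : ℝ)⁻¹ ≤ f x) ∧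
    (xunif ∈ simplex ∧ f xunif = (n : ℝ)⁻¹) ∧
    (∀ x ∈ simplex, f x ≤ (n : ℝ)⁻¹ + (t : ℝ)⁻¹ - (n : ℝ)⁻¹ →
      t ≤ (Finset.univ.filter fun i => x i ≠ 0).card) := by
  change simplex = stdSimplex ℝ (Fin n) at hsimplex
  subst hsimplex
  have hf_simplex : ∀ x ∈ stdSimplex ℝ (Fin n), f x = ∑ i, x i ^ 2 := fun x hx => by
    rw [hf, sum_sub_one_sq_of_sum_eq_one hx.2, Fintype.card_fin]; ring
  have hcard_t : #{i : Fin n | (i : ℕ) < t} = t := by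
    simpa [htn] using Fin.card_filter_val_lt (n := n) (m := t)
  have hxt_eq : xt = uniformOn {i : Fin n | (i : ℕ) < t} := by
    ext i; simp [hxt, uniformOn, hcard_t]
  have hxunif_eq : xunif = uniformOn univ := by
    ext i; simp [hxunif, uniformOn]
  have hxt_mem : xt ∈ stdSimplex ℝ (Fin n) :=
    hxt_eq ▸ uniformOn_mem_stdSimplex _ (card_pos.mp (hcard_t.symm ▸ ht))
  have hxunif_mem : xunif ∈ stdSimplex ℝ (Fin n) :=
    hxunif_eq ▸ uniformOn_mem_stdSimplex _ (univ_nonempty_iff.mpr ⟨⟨0, ht.trans htn⟩⟩)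
  refine ⟨fun x hx hsupp => ?_, ⟨hxt_mem, ?_⟩, fun x hx => ?_, ⟨hxunif_mem, ?_⟩, fun x hx hle => ?_⟩
  · rw [hf_simplex x hx]
    exact inv_le_sum_sq_of_card_support_le hx.2 (by convert hsupp)
  · rw [hf_simplex xt hxt_mem, hxt_eq, sum_sq_uniformOn, hcard_t]
  · rw [hf_simplex x hx]
    exact inv_le_sum_sq_of_card_support_le hx.2 ((card_filter_le _ _).trans_eq (by simp))
  · rw [hf_simplex xunif hxunif_mem, hxunif_eq, sum_sq_uniformOn, card_univ, Fintype.card_fin]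
  · rw [hf_simplex x hx, add_sub_cancel_left] at hle
    convert le_card_support_of_sum_sq_le ht hx.2 hle
end
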